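/- arXiv:1204.4505 — 2 statements merged into one kernel-verified Lean document; each statement's English description precedes it below -/
import Mathlib

section
/- Every reduced word in the Temperley-Lieb generators can be written in Jones' normal form (u_{j_1} u_{j_1-1} ... u_{k_1})(u_{j_2} u_{j_2-1} ... u_{k_2}) ... (u_{j_r} u_{j_r-1} ... u_{k_r}) where 0 < j_1 < j_2 < ... < j_r < n and 0 < k_1 < k_2 < ... < k_r < n and j_i >= k_i for each i. -/
/-- The defining relations of the Temperley–Lieb algebra with `m` generators
(`TL_n` for `n = m+1`). -/
inductive TLRel (β : ℂ) (m : ℕ) : FreeAlgebra ℂ (Fin m) → FreeAlgebra ℂ (Fin m) → Prop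
  | sq (i : Fin m) :
      TLRel β m (FreeAlgebra.ι ℂ i * FreeAlgebra.ι ℂ i) (β • FreeAlgebra.ι ℂ i)
  | absorb (i j : Fin m) (h : (i : ℕ) + 1 = (j : ℕ) ∨ (j : ℕ) + 1 = (i : ℕ)) :
      TLRel β m (FreeAlgebra.ι ℂ i * FreeAlgebra.ι ℂ j * FreeAlgebra.ι ℂ i)
        (FreeAlgebra.ι ℂ i)
  | comm (i j : Fin m) (h : (i : ℕ) + 1 < (j : ℕ) ∨ (j : ℕ) + 1 < (i : ℕ)) :
      TLRel β m (FreeAlgebra.ι ℂ i * FreeAlgebra.ι ℂ j)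
        (FreeAlgebra.ι ℂ j * FreeAlgebra.ι ℂ i)

/-- The abstract Temperley–Lieb algebra with parameter `β` and `m` generators. -/
abbrev TL (β : ℂ) (m : ℕ) : Type := RingQuot (TLRel β m)

/-- The generator `u_{i+1}` of `TL_{m+1}`. -/
noncomputable def TLgen (β : ℂ) (m : ℕ) (i : Fin m) : TL β m :=
  RingQuot.mkAlgHom ℂ (TLRel β m) (FreeAlgebra.ι ℂ i)

/-- The element of `TL` represented by a word in the generators. -/
noncomputable def wordProd (β : ℂ) (m : ℕ) (l : List (Fin m)) : TL β m :=
  (l.map (TLgen β m)).prod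

/-- A word is reduced if it is not (in the algebra) a scalar multiple of a word
with strictly fewer generators. -/
def Reduced (β : ℂ) (m : ℕ) (l : List (Fin m)) : Prop :=
  ¬ ∃ (l' : List (Fin m)) (c : ℂ),
      l'.length < l.length ∧ wordProd β m l = c • wordProd β m l'

/-- The decreasing consecutive run of generator indices `j, j-1, …, k`. -/
def descRun {m : ℕ} (j k : Fin m) : List (Fin m) :=
  (List.range (j.val + 1 - k.val)).map
    (fun t => ⟨j.val - t, Nat.lt_of_le_of_lt (Nat.sub_le _ _) j.isLt⟩)

/-!
Induction on the length of the word, appending one generator `u_a` at a time to a word already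
in normal form, and comparing `a` with the last run `u_j ⋯ u_k`:
* if `j < a`, `u_a` starts a new run;
* if `k ≤ a ≤ j`, the run contains `u_a` and `u_a ⋯ u_a` collapses by `u_a² = β u_a` or by
  `u_a u_{a-1} u_a = u_a` after commuting, so the word was not reduced;
* if `a = k - 1`, the run extends to `u_j ⋯ u_a`, unless the previous run ends in `u_a`, in which
  case `u_a ⋯ u_{a+1} u_a` collapses;
* if `a < k - 1`, `u_a` commutes past the whole last run, and one recurses on the shorter form.
-/

section TemperleyLieb

variable {β : ℂ} {m : ℕ}

@[simp]
lemma wordProd_nil : wordProd β m [] = 1 := rfl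

@[simp]
lemma wordProd_cons (a : Fin m) (l : List (Fin m)) :
    wordProd β m (a :: l) = TLgen β m a * wordProd β m l := by
  simp [wordProd]

@[simp]
lemma wordProd_append (l₁ l₂ : List (Fin m)) :
    wordProd β m (l₁ ++ l₂) = wordProd β m l₁ * wordProd β m l₂ := by
  simp [wordProd]

lemma TLgen_mul_self (i : Fin m) : TLgen β m i * TLgen β m i = β • TLgen β m i := by
  simpa [TLgen] using RingQuot.mkAlgHom_rel ℂ (TLRel.sq (β := β) i)

lemma TLgen_mul_mul_self_of_adjacent {i j : Fin m}
    (h : (i : ℕ) + 1 = (j : ℕ) ∨ (j : ℕ) + 1 = (i : ℕ)) :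
    TLgen β m i * TLgen β m j * TLgen β m i = TLgen β m i := by
  simpa [TLgen] using RingQuot.mkAlgHom_rel ℂ (TLRel.absorb (β := β) i j h)

lemma TLgen_commute {i j : Fin m} (h : (i : ℕ) + 1 < (j : ℕ) ∨ (j : ℕ) + 1 < (i : ℕ)) :
    Commute (TLgen β m i) (TLgen β m j) := by
  simpa [TLgen, Commute, SemiconjBy] using RingQuot.mkAlgHom_rel ℂ (TLRel.comm (β := β) i j h)

lemma TLgen_commute_wordProd {a : Fin m} {l : List (Fin m)}
    (h : ∀ b ∈ l, (a : ℕ) + 1 < (b : ℕ) ∨ (b : ℕ) + 1 < (a : ℕ)) :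
    Commute (TLgen β m a) (wordProd β m l) :=
  Commute.list_prod_right _ _ fun _ hx => by
    obtain ⟨b, hb, rfl⟩ := List.mem_map.1 hx
    exact TLgen_commute (h b hb)

/-- `Reduced β m l` is by definition `¬ Reducible β m l`. -/
def Reducible (β : ℂ) (m : ℕ) (l : List (Fin m)) : Prop :=
  ∃ (l' : List (Fin m)) (c : ℂ),
    l'.length < l.length ∧ wordProd β m l = c • wordProd β m l'

lemma Reducible.append_left {l : List (Fin m)} (h : Reducible β m l) (u : List (Fin m)) :
    Reducible β m (u ++ l) := by
  obtain ⟨l', c, hlt, heq⟩ := h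
  exact ⟨u ++ l', c, by simpa using hlt,
    by rw [wordProd_append, wordProd_append, heq, mul_smul_comm]⟩

lemma Reducible.append_right {l : List (Fin m)} (h : Reducible β m l) (v : List (Fin m)) :
    Reducible β m (l ++ v) := by
  obtain ⟨l', c, hlt, heq⟩ := h
  exact ⟨l' ++ v, c, by simpa using hlt,
    by rw [wordProd_append, wordProd_append, heq, smul_mul_assoc]⟩

lemma Reducible.of_wordProd_eq {l l' : List (Fin m)} (h : Reducible β m l)
    (hprod : wordProd β m l' = wordProd β m l) (hlen : l.length ≤ l'.length) :
    Reducible β m l' := by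
  obtain ⟨l'', c, hlt, heq⟩ := h
  exact ⟨l'', c, by omega, hprod.trans heq⟩

lemma reducible_pair_self (a : Fin m) : Reducible β m [a, a] :=
  ⟨[a], β, by simp, by simp [TLgen_mul_self]⟩

lemma reducible_absorb {a b : Fin m} (hab : (a : ℕ) + 1 = (b : ℕ) ∨ (b : ℕ) + 1 = (a : ℕ))
    {X Y : List (Fin m)} (hX : ∀ x ∈ X, (a : ℕ) + 1 < (x : ℕ) ∨ (x : ℕ) + 1 < (a : ℕ))
    (hY : ∀ y ∈ Y, (a : ℕ) + 1 < (y : ℕ) ∨ (y : ℕ) + 1 < (a : ℕ)) :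
    Reducible β m (a :: X ++ b :: Y ++ [a]) := by
  refine ⟨X ++ a :: Y, 1, by simp, ?_⟩
  rw [one_smul]
  calc wordProd β m (a :: X ++ b :: Y ++ [a])
      = (TLgen β m a * wordProd β m X) * TLgen β m b * (wordProd β m Y * TLgen β m a) := by
        simp [mul_assoc]
    _ = wordProd β m X * (TLgen β m a * TLgen β m b * TLgen β m a) * wordProd β m Y := by
        rw [(TLgen_commute_wordProd hX).eq, ← (TLgen_commute_wordProd hY).eq]
        simp only [mul_assoc]
    _ = wordProd β m (X ++ a :: Y) := by
        rw [TLgen_mul_mul_self_of_adjacent hab]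
        simp [mul_assoc]

lemma mem_descRun {j k e : Fin m} : e ∈ descRun j k ↔ k ≤ e ∧ e ≤ j := by
  simp only [descRun, List.mem_map, List.mem_range, Fin.ext_iff, Fin.le_def]
  constructor
  · rintro ⟨t, ht, he⟩
    omega
  · intro h
    exact ⟨j - e, by omega, by omega⟩

lemma descRun_self (a : Fin m) : descRun a a = [a] := by
  simp [descRun]

lemma descRun_append_descRun {j i' i k : Fin m} (hi : (i' : ℕ) = i + 1) (hj : i' ≤ j)
    (hk : k ≤ i) : descRun j i' ++ descRun i k = descRun j k := by
  rw [Fin.le_def] at hj hk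
  unfold descRun
  rw [show (j : ℕ) + 1 - k = (j + 1 - i') + (i + 1 - k) by omega, List.range_add, List.map_append,
    List.map_map]
  congr 1
  refine List.map_congr_left fun t ht => ?_
  simp only [List.mem_range] at ht
  ext
  simp only [Function.comp_apply]
  omega

lemma descRun_eq_cons {j k : Fin m} (hkj : k ≤ j) :
    ∃ B, descRun j k = j :: B ∧ ∀ b ∈ B, b < j := by
  rcases hkj.eq_or_lt with rfl | hlt
  · exact ⟨[], descRun_self k, by simp⟩
  · let j' : Fin m := ⟨j - 1, by omega⟩
    refine ⟨descRun j' k, ?_, fun b hb => ?_⟩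
    · rw [← descRun_append_descRun (i := j') (by simp [j']; omega) le_rfl
        (by rw [Fin.le_def]; simp [j']; omega), descRun_self, List.singleton_append]
    · have := (mem_descRun.1 hb).2
      simp only [Fin.le_def, Fin.lt_def, j'] at this ⊢
      omega

lemma descRun_eq_append_singleton {j k : Fin m} (hkj : k ≤ j) :
    ∃ W, descRun j k = W ++ [k] ∧ ∀ w ∈ W, k < w := by
  rcases hkj.eq_or_lt with rfl | hlt
  · exact ⟨[], descRun_self k, by simp⟩
  · let k' : Fin m := ⟨k + 1, by omega⟩
    refine ⟨descRun j k', ?_, fun w hw => ?_⟩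
    · rw [← descRun_append_descRun (i' := k') rfl (by rw [Fin.le_def]; simp [k']; omega) le_rfl,
        descRun_self]
    · have := (mem_descRun.1 hw).1
      simp only [Fin.le_def, Fin.lt_def, k'] at this ⊢
      omega

lemma reducible_descRun_append_singleton {j k a : Fin m} (hka : k ≤ a) (haj : a ≤ j) :
    Reducible β m (descRun j k ++ [a]) := by
  rcases hka.eq_or_lt with rfl | hlt
  · obtain ⟨W, hW, -⟩ := descRun_eq_append_singleton haj
    simpa [hW] using (reducible_pair_self (β := β) k).append_left W
  · -- `u_a u_{a-1} ⋯ u_a`: the trailing `u_a` commutes back to meet `u_a u_{a-1}`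
    let a' : Fin m := ⟨a - 1, by omega⟩
    have hka' : k ≤ a' := by simp only [Fin.le_def, Fin.lt_def, a'] at hlt ⊢; omega
    obtain ⟨W, hW, -⟩ := descRun_eq_append_singleton haj
    obtain ⟨B, hB, hBa'⟩ := descRun_eq_cons hka'
    have hfar : ∀ b ∈ B, (a : ℕ) + 1 < (b : ℕ) ∨ (b : ℕ) + 1 < (a : ℕ) := by
      intro b hb
      have := hBa' b hb
      simp only [Fin.lt_def, a'] at this
      omega
    rw [← descRun_append_descRun (i' := a) (i := a') (by simp [a']; omega) haj hka', hW, hB]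
    simpa using (reducible_absorb (β := β) (b := a') (X := []) (by simp [a']; omega)
      (by simp) hfar).append_left W

lemma reducible_descRun_append_descRun_append_singleton {j₀ a j k : Fin m} (haj₀ : a ≤ j₀)
    (hk : (k : ℕ) = a + 1) (hkj : k ≤ j) :
    Reducible β m (descRun j₀ a ++ descRun j k ++ [a]) := by
  obtain ⟨W, hW, -⟩ := descRun_eq_append_singleton haj₀
  obtain ⟨C, hC, hCk⟩ := descRun_eq_append_singleton hkj
  have hfar : ∀ c ∈ C, (a : ℕ) + 1 < (c : ℕ) ∨ (c : ℕ) + 1 < (a : ℕ) := fun c hc => by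
    have := hCk c hc
    rw [Fin.lt_def] at this
    omega
  rw [hW, hC]
  simpa using
    (reducible_absorb (β := β) (b := k) (Y := []) (by omega) hfar (by simp)).append_left W

/-- A list of pairs `(j_i, k_i)` satisfying the constraints of Jones' normal form. -/
def IsJonesForm (L : List (Fin m × Fin m)) : Prop :=
  L.Pairwise (fun p q => p.1 < q.1 ∧ p.2 < q.2) ∧ ∀ p ∈ L, p.2 ≤ p.1

def jonesWord (L : List (Fin m × Fin m)) : List (Fin m) :=
  (L.map fun p => descRun p.1 p.2).flatten

@[simp]
lemma jonesWord_append (L₁ L₂ : List (Fin m × Fin m)) :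
    jonesWord (L₁ ++ L₂) = jonesWord L₁ ++ jonesWord L₂ := by
  simp [jonesWord]

@[simp]
lemma jonesWord_singleton (p : Fin m × Fin m) : jonesWord [p] = descRun p.1 p.2 := by
  simp [jonesWord]

lemma isJonesForm_nil : IsJonesForm ([] : List (Fin m × Fin m)) := by
  simp [IsJonesForm]

lemma isJonesForm_append_singleton {L : List (Fin m × Fin m)} {p : Fin m × Fin m} :
    IsJonesForm (L ++ [p]) ↔
      IsJonesForm L ∧ (∀ x ∈ L, x.1 < p.1 ∧ x.2 < p.2) ∧ p.2 ≤ p.1 := by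
  simp only [IsJonesForm, List.pairwise_append, List.pairwise_singleton, List.mem_singleton,
    List.mem_append, forall_eq, true_and, or_imp, forall_and]
  tauto

/-- The conditions on the entries of `L'` keep its runs below any run `(j, k)` that bounds both
`L` and `a`, which is what lets `u_a` be commuted past such a run in the induction. -/
def IsJonesSnoc (β : ℂ) (L : List (Fin m × Fin m)) (a : Fin m) (L' : List (Fin m × Fin m)) :
    Prop :=
  IsJonesForm L' ∧
    L'.map Prod.fst ⊆ a :: L.map Prod.fst ∧ L'.map Prod.snd ⊆ a :: L.map Prod.snd ∧
    (jonesWord L').length = (jonesWord L).length + 1 ∧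
    wordProd β m (jonesWord L') = wordProd β m (jonesWord L ++ [a])

lemma IsJonesSnoc.of_jonesWord_eq {L L' : List (Fin m × Fin m)} {a : Fin m}
    (hL' : IsJonesForm L') (hfst : L'.map Prod.fst ⊆ a :: L.map Prod.fst)
    (hsnd : L'.map Prod.snd ⊆ a :: L.map Prod.snd) (h : jonesWord L' = jonesWord L ++ [a]) :
    IsJonesSnoc β L a L' :=
  ⟨hL', hfst, hsnd, by simp [h], by rw [h]⟩

lemma isJonesSnoc_new_run {L : List (Fin m × Fin m)} {a : Fin m} (hL : IsJonesForm L)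
    (ha : ∀ x ∈ L, x.1 < a) : IsJonesSnoc β L a (L ++ [(a, a)]) := by
  refine .of_jonesWord_eq (isJonesForm_append_singleton.2 ⟨hL, fun x hx => ?_, le_rfl⟩)
    (by intro x; simp; tauto) (by intro x; simp; tauto) (by simp [descRun_self])
  exact ⟨ha x hx, (hL.2 x hx).trans_lt (ha x hx)⟩

lemma isJonesSnoc_extend_run {L : List (Fin m × Fin m)} {j k a : Fin m}
    (hL : IsJonesForm (L ++ [(j, k)])) (hk : (k : ℕ) = a + 1) (ha : ∀ x ∈ L, x.2 < a) :
    IsJonesSnoc β (L ++ [(j, k)]) a (L ++ [(j, a)]) := by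
  obtain ⟨hL, hlt, hkj⟩ := isJonesForm_append_singleton.1 hL
  have hext : descRun j k ++ [a] = descRun j a := by
    rw [← descRun_self a, descRun_append_descRun hk hkj le_rfl]
  have haj : a ≤ j := by simp only [Fin.le_def] at hkj ⊢; omega
  exact .of_jonesWord_eq
    (isJonesForm_append_singleton.2 ⟨hL, fun x hx => ⟨(hlt x hx).1, ha x hx⟩, haj⟩)
    (by intro x; simp; tauto) (by intro x; simp; tauto) (by simp [← hext])

lemma IsJonesForm.reducible_or_extend_run {L : List (Fin m × Fin m)} {j k a : Fin m}
    (hL : IsJonesForm (L ++ [(j, k)])) (hk : (k : ℕ) = a + 1) :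
    Reducible β m (jonesWord (L ++ [(j, k)]) ++ [a]) ∨
      ∃ L', IsJonesSnoc β (L ++ [(j, k)]) a L' := by
  obtain ⟨hL₀, hlt, -⟩ := isJonesForm_append_singleton.1 hL
  rcases List.eq_nil_or_concat' L with rfl | ⟨L₀, ⟨j₀, k₀⟩, rfl⟩
  · exact .inr ⟨_, isJonesSnoc_extend_run hL hk (by simp)⟩
  obtain ⟨-, hlt₀, hkj₀⟩ := isJonesForm_append_singleton.1 hL₀
  have hk₀ : (k₀ : ℕ) < k := (hlt (j₀, k₀) (by simp)).2
  rcases (show (k₀ : ℕ) = a ∨ (k₀ : ℕ) < a by omega) with hk₀a | hk₀a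
  · obtain rfl : k₀ = a := Fin.ext hk₀a
    left
    simpa [jonesWord] using (reducible_descRun_append_descRun_append_singleton (β := β) hkj₀ hk
      (isJonesForm_append_singleton.1 hL).2.2).append_left (jonesWord L₀)
  · refine .inr ⟨_, isJonesSnoc_extend_run hL hk fun x hx => ?_⟩
    rcases List.mem_append.1 hx with hx | hx
    · exact (hlt₀ x hx).2.trans (Fin.lt_def.2 hk₀a)
    · obtain rfl := List.mem_singleton.1 hx
      exact Fin.lt_def.2 hk₀a

lemma wordProd_descRun_append_singleton {j k a : Fin m} (hk : (a : ℕ) + 1 < k) :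
    wordProd β m (descRun j k ++ [a]) = wordProd β m (a :: descRun j k) := by
  have : Commute (TLgen β m a) (wordProd β m (descRun j k)) := TLgen_commute_wordProd
    fun b hb => by have := mem_descRun.1 hb; simp only [Fin.le_def] at this; omega
  simp [this.eq]

lemma IsJonesSnoc.append_run {L L' : List (Fin m × Fin m)} {j k a : Fin m}
    (h : IsJonesSnoc β L a L') (hL : IsJonesForm (L ++ [(j, k)])) (hk : (a : ℕ) + 1 < k) :
    IsJonesSnoc β (L ++ [(j, k)]) a (L' ++ [(j, k)]) := by
  obtain ⟨hL', hfst, hsnd, hlen, hprod⟩ := h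
  obtain ⟨-, hlt, hkj⟩ := isJonesForm_append_singleton.1 hL
  dsimp only at hlt hkj
  have hbound : ∀ x ∈ L', x.1 < j ∧ x.2 < k := fun x hx => by
    constructor
    · rcases List.mem_cons.1 (hfst (List.mem_map_of_mem hx)) with h | h
      · exact h ▸ Fin.lt_def.2 (by rw [Fin.le_def] at hkj; omega)
      · obtain ⟨y, hy, hyx⟩ := List.mem_map.1 h
        exact hyx ▸ (hlt y hy).1
    · rcases List.mem_cons.1 (hsnd (List.mem_map_of_mem hx)) with h | h
      · exact h ▸ Fin.lt_def.2 (by omega)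
      · obtain ⟨y, hy, hyx⟩ := List.mem_map.1 h
        exact hyx ▸ (hlt y hy).2
  refine ⟨isJonesForm_append_singleton.2 ⟨hL', hbound, hkj⟩, ?_, ?_,
    by simp [hlen]; omega, ?_⟩
  · simp only [List.map_append, List.map_cons, List.map_nil]
    exact List.append_subset.2
      ⟨List.Subset.trans hfst (List.cons_subset_cons _ (List.subset_append_left _ _)), by simp⟩
  · simp only [List.map_append, List.map_cons, List.map_nil]
    exact List.append_subset.2
      ⟨List.Subset.trans hsnd (List.cons_subset_cons _ (List.subset_append_left _ _)), by simp⟩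
  · have hcomm := wordProd_descRun_append_singleton (β := β) (j := j) hk
    simp only [jonesWord_append, jonesWord_singleton, wordProd_append, wordProd_cons,
      wordProd_nil, mul_one, List.append_assoc] at hcomm hprod ⊢
    rw [hcomm, hprod, mul_assoc]

theorem IsJonesForm.reducible_or_isJonesSnoc {L : List (Fin m × Fin m)} (hL : IsJonesForm L)
    (a : Fin m) :
    Reducible β m (jonesWord L ++ [a]) ∨ ∃ L', IsJonesSnoc β L a L' := by
  induction L using List.reverseRecOn with
  | nil => exact .inr ⟨_, isJonesSnoc_new_run hL (by simp)⟩
  | append_singleton L p ih =>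
    obtain ⟨j, k⟩ := p
    obtain ⟨hL₀, hlt, -⟩ := isJonesForm_append_singleton.1 hL
    rcases lt_or_ge j a with hja | haj
    · refine .inr ⟨_, isJonesSnoc_new_run hL fun x hx => ?_⟩
      rcases List.mem_append.1 hx with hx | hx
      · exact (hlt x hx).1.trans hja
      · obtain rfl := List.mem_singleton.1 hx
        exact hja
    rcases le_or_gt k a with hka | hak
    · left
      simpa using (reducible_descRun_append_singleton (β := β) hka haj).append_left (jonesWord L)
    rcases (show (k : ℕ) = a + 1 ∨ (a : ℕ) + 1 < k by rw [Fin.lt_def] at hak; omega)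
      with hk | hk
    · exact hL.reducible_or_extend_run hk
    -- `u_a` commutes past the last run, so the problem reduces to appending `a` to `L`
    rcases ih hL₀ with hred | ⟨L', hL'⟩
    · left
      refine (hred.append_right (descRun j k)).of_wordProd_eq ?_ (by simp)
      simp only [jonesWord_append, jonesWord_singleton, List.append_assoc, wordProd_append,
        wordProd_descRun_append_singleton hk, wordProd_cons, wordProd_nil, mul_one]
    · exact .inr ⟨_, hL'.append_run hL hk⟩

theorem reducible_or_exists_isJonesForm (l : List (Fin m)) :
    Reducible β m l ∨ ∃ L, IsJonesForm L ∧ (jonesWord L).length = l.length ∧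
      wordProd β m (jonesWord L) = wordProd β m l := by
  induction l using List.reverseRecOn with
  | nil => exact .inr ⟨[], isJonesForm_nil, rfl, rfl⟩
  | append_singleton l a ih =>
    rcases ih with hred | ⟨L, hL, hlen, hprod⟩
    · exact .inl (hred.append_right [a])
    rcases hL.reducible_or_isJonesSnoc (β := β) a with hred | ⟨L', hL', -, -, hlen', hprod'⟩
    · exact .inl (hred.of_wordProd_eq (by simp [hprod]) (by simp [hlen]))
    · exact .inr ⟨L', hL', by simp [hlen', hlen], by rw [hprod']; simp [hprod]⟩

lemma IsJonesForm.strictMono_fst {L : List (Fin m × Fin m)} (hL : IsJonesForm L) :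
    StrictMono fun i : Fin L.length => L[i].1 :=
  fun _ _ h => (List.pairwise_iff_getElem.1 hL.1 _ _ _ _ h).1

lemma IsJonesForm.strictMono_snd {L : List (Fin m × Fin m)} (hL : IsJonesForm L) :
    StrictMono fun i : Fin L.length => L[i].2 :=
  fun _ _ h => (List.pairwise_iff_getElem.1 hL.1 _ _ _ _ h).2

lemma jonesWord_eq_flatten_ofFn (L : List (Fin m × Fin m)) :
    jonesWord L = (List.ofFn fun i : Fin L.length => descRun L[i].1 L[i].2).flatten := by
  simp only [jonesWord, Fin.getElem_fin]
  rw [List.ofFn_getElem_eq_map L fun p => descRun p.1 p.2]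

end TemperleyLieb

/-- Jones' normal form: any reduced Temperley–Lieb word can be written as
`(u_{j_1} u_{j_1-1} ⋯ u_{k_1}) ⋯ (u_{j_r} u_{j_r-1} ⋯ u_{k_r})` with
`j_1 < … < j_r`, `k_1 < … < k_r` and `k_i ≤ j_i` for all `i`. -/
theorem stmt_5 (β : ℂ) (m : ℕ) (l : List (Fin m)) (hred : Reduced β m l) :
    ∃ (r : ℕ) (j k : Fin r → Fin m), StrictMono j ∧ StrictMono k ∧
      (∀ i, k i ≤ j i) ∧
      wordProd β m l = wordProd β m ((List.ofFn (fun i => descRun (j i) (k i))).flatten) := by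
  rcases reducible_or_exists_isJonesForm (β := β) l with hred' | ⟨L, hL, -, hprod⟩
  · exact absurd hred' hred
  · exact ⟨L.length, fun i => L[i].1, fun i => L[i].2, hL.strictMono_fst, hL.strictMono_snd,
      fun i => hL.2 _ (List.getElem_mem _), by rw [← hprod, jonesWord_eq_flatten_ofFn]⟩
end

section
/- Let q be a root of unity with ell >= 2 minimal such that q^{2 ell} = 1, and let (n,p) and (n,p') with p > p' form a symmetric pair (both non-critical, reflected across the single critical line between them). Then d_{n,p} = L_{n,p} + L_{n,p'}, i.e. dim V_{n,p} = dim L_{n,p} + dim L_{n,p'}, where L denotes the dimensions defined by the recursion of Corollary DimL and d_{n,p} = binom(n,p) - binom(n,p-1). -/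
/-- `d_{n,p} = binom(n,p) - binom(n,p-1)`, with `binom(n,-1) = 0`. -/
def dd (n k : ℕ) : ℕ := n.choose k - (if k = 0 then 0 else n.choose (k - 1))

/-- `r(n,p) ∈ {1,…,ℓ}` defined by `n - 2p + 1 = k(n,p)·ℓ + r(n,p)`. -/
def rfn (ℓ n p : ℕ) : ℕ := (n - 2 * p) % ℓ + 1

/-- The recursion for `dim L_{n,p}` (Corollary DimL). -/
def Lrec (ℓ : ℕ) : ℕ → ℕ → ℕ
  | _, 0 => 1
  | 0, _ + 1 => 0
  | n + 1, p + 1 =>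
    if n + 2 = 2 * (p + 1) then 0
    else if n + 1 < 2 * (p + 1) then 0
    else if rfn ℓ (n + 1) (p + 1) = ℓ then dd (n + 1) (p + 1)
    else if rfn ℓ (n + 1) (p + 1) = ℓ - 1 then Lrec ℓ n (p + 1)
    else Lrec ℓ n (p + 1) + Lrec ℓ n p


lemma Lrec_zero (ℓ n : ℕ) : Lrec ℓ n 0 = 1 := by cases n <;> rfl

lemma Lrec_succ (ℓ n p : ℕ) :
    Lrec ℓ (n + 1) (p + 1) =
      if n + 2 = 2 * (p + 1) then 0
      else if n + 1 < 2 * (p + 1) then 0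
      else if rfn ℓ (n + 1) (p + 1) = ℓ then dd (n + 1) (p + 1)
      else if rfn ℓ (n + 1) (p + 1) = ℓ - 1 then Lrec ℓ n (p + 1)
      else Lrec ℓ n (p + 1) + Lrec ℓ n p := rfl

lemma dd_zero (n : ℕ) : dd n 0 = 1 := by simp [dd]

lemma rfn_eq (ℓ n p c K : ℕ) (h : n - 2 * p = ℓ * K + c) (hc : c < ℓ) :
    rfn ℓ n p = c + 1 := by
  unfold rfn
  rw [h, Nat.mul_add_mod, Nat.mod_eq_of_lt hc]

lemma Lrec_step (ℓ n p : ℕ) (hp : 1 ≤ p) (h : 2 * p ≤ n) :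
    Lrec ℓ n p = if rfn ℓ n p = ℓ then dd n p
      else if rfn ℓ n p = ℓ - 1 then Lrec ℓ (n - 1) p
      else Lrec ℓ (n - 1) p + Lrec ℓ (n - 1) (p - 1) := by
  obtain ⟨p0, rfl⟩ : ∃ p0, p = p0 + 1 := ⟨p - 1, by omega⟩
  obtain ⟨n0, rfl⟩ : ∃ n0, n = n0 + 1 := ⟨n - 1, by omega⟩
  rw [Lrec_succ, if_neg (by omega), if_neg (by omega)]
  simp

lemma Lrec_diag (ℓ p : ℕ) (hp : 1 ≤ p) : Lrec ℓ (2 * p - 1) p = 0 := by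
  obtain ⟨p0, rfl⟩ : ∃ p0, p = p0 + 1 := ⟨p - 1, by omega⟩
  rw [show 2 * (p0 + 1) - 1 = 2 * p0 + 1 by omega, Lrec_succ, if_pos (by omega)]

lemma dd_diag (p : ℕ) (hp : 1 ≤ p) : dd (2 * p - 1) p = 0 := by
  have h1 : (2 * p - 1).choose (p - 1) = (2 * p - 1).choose p := by
    rw [show p - 1 = 2 * p - 1 - p by omega]
    exact Nat.choose_symm (by omega)
  rw [dd, if_neg (show ¬ p = 0 by omega), h1]
  omega

lemma choose_pred_le (n p : ℕ) (h : 2 * p ≤ n + 1) : n.choose (p - 1) ≤ n.choose p := by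
  rcases Nat.eq_zero_or_pos p with rfl | hp
  · simp
  by_cases h2 : 2 * p ≤ n
  · have hlt : p - 1 < n / 2 := by omega
    have := Nat.choose_le_succ_of_lt_half_left hlt
    rwa [Nat.sub_add_cancel hp] at this
  · have he : p - 1 = n - p := by omega
    rw [he, Nat.choose_symm (by omega)]

lemma dd_pascal (n p : ℕ) (hp : 1 ≤ p) (h : 2 * p ≤ n + 1) :
    dd (n + 1) p = dd n p + dd n (p - 1) := by
  obtain ⟨p0, rfl⟩ : ∃ p0, p = p0 + 1 := ⟨p - 1, by omega⟩
  rcases Nat.eq_zero_or_pos p0 with rfl | hp0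
  · simp only [dd]
    simp [Nat.choose_one_right]
    omega
  obtain ⟨p1, rfl⟩ : ∃ p1, p0 = p1 + 1 := ⟨p0 - 1, by omega⟩
  have e1 : (n + 1).choose (p1 + 1 + 1) = n.choose (p1 + 1) + n.choose (p1 + 1 + 1) :=
    Nat.choose_succ_succ n (p1 + 1)
  have e2 : (n + 1).choose (p1 + 1) = n.choose p1 + n.choose (p1 + 1) :=
    Nat.choose_succ_succ n p1
  have m1 : n.choose (p1 + 1) ≤ n.choose (p1 + 1 + 1) := by
    have := choose_pred_le n (p1 + 2) h
    simpa using this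
  have m2 : n.choose p1 ≤ n.choose (p1 + 1) := by
    have := choose_pred_le n (p1 + 1) (by omega)
    simpa using this
  simp only [dd, if_neg (by omega : ¬ p1 + 1 + 1 = 0), if_neg (by omega : ¬ p1 + 1 = 0),
    Nat.add_sub_cancel]
  omega

lemma Lrec_crit (ℓ n p : ℕ) (h : 2 * p ≤ n) (hr : rfn ℓ n p = ℓ) :
    Lrec ℓ n p = dd n p := by
  rcases Nat.eq_zero_or_pos p with rfl | hp
  · rw [Lrec_zero, dd_zero]
  rw [Lrec_step ℓ n p hp h, if_pos hr]

/-- Lemma U: below the first critical line, `L = d`. -/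
lemma Lrec_low (ℓ : ℕ) (hℓ : 2 ≤ ℓ) (n : ℕ) :
    ∀ p, 2 * p ≤ n → p + rfn ℓ n p < ℓ → Lrec ℓ n p = dd n p := by
  induction n using Nat.strong_induction_on with
  | _ n IH =>
    intro p hnp hlow
    rcases Nat.eq_zero_or_pos p with rfl | hp
    · rw [Lrec_zero, dd_zero]
    have hr : rfn ℓ n p = (n - 2 * p) % ℓ + 1 := rfl
    obtain ⟨k, hk⟩ : ∃ k, n - 2 * p = ℓ * k + (n - 2 * p) % ℓ :=
      ⟨(n - 2 * p) / ℓ, (Nat.div_add_mod _ ℓ).symm⟩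
    set s := (n - 2 * p) % ℓ with hs
    have hsl : s < ℓ := Nat.mod_lt _ (by omega)
    have hn2 : n = 2 * p + (ℓ * k + s) := by omega
    rw [hr] at hlow
    -- s + p + 1 < ℓ, so s ≤ ℓ - 3 and ℓ ≥ 3
    rw [Lrec_step ℓ n p hp hnp, hr, if_neg (by omega), if_neg (by omega)]
    -- second factor at (n-1, p-1)
    have hr2 : rfn ℓ (n - 1) (p - 1) = (s + 1) + 1 :=
      rfn_eq ℓ (n - 1) (p - 1) (s + 1) k (by omega) (by omega)
    have h2 : Lrec ℓ (n - 1) (p - 1) = dd (n - 1) (p - 1) := by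
      rcases Nat.eq_zero_or_pos (p - 1) with h0 | hp1
      · rw [h0, Lrec_zero, dd_zero]
      · exact IH (n - 1) (by omega) (p - 1) (by omega) (by omega)
    -- first factor at (n-1, p)
    have h1 : Lrec ℓ (n - 1) p = dd (n - 1) p := by
      by_cases hs0 : s = 0
      · rcases Nat.eq_zero_or_pos k with rfl | hk1
        · -- n = 2p
          have hd : n - 1 = 2 * p - 1 := by omega
          rw [hd, Lrec_diag ℓ p hp, dd_diag p hp]
        · -- critical
          have hA : ℓ * k = ℓ * (k - 1) + ℓ := by
            obtain ⟨k0, rfl⟩ : ∃ k0, k = k0 + 1 := ⟨k - 1, by omega⟩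
            rw [Nat.add_sub_cancel]
            ring
          have hrc : rfn ℓ (n - 1) p = (ℓ - 1) + 1 :=
            rfn_eq ℓ (n - 1) p (ℓ - 1) (k - 1) (by omega) (by omega)
          exact Lrec_crit ℓ (n - 1) p (by omega) (by omega)
      · have hrc : rfn ℓ (n - 1) p = (s - 1) + 1 :=
          rfn_eq ℓ (n - 1) p (s - 1) k (by omega) (by omega)
        exact IH (n - 1) (by omega) p (by omega) (by omega)
    rw [h1, h2]
    have := dd_pascal (n - 1) p hp (by omega)
    rw [show n - 1 + 1 = n by omega] at this
    omega

/-- Main lemma: at a symmetric pair, `d_{n,p} = L_{n,p} + L_{n,p'}`. -/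
lemma main_lemma (ℓ : ℕ) (hℓ : 2 ≤ ℓ) (n : ℕ) :
    ∀ p, 2 * p ≤ n → rfn ℓ n p ≠ ℓ → ℓ ≤ p + rfn ℓ n p →
      dd n p = Lrec ℓ n p + Lrec ℓ n (p + rfn ℓ n p - ℓ) := by
  induction n using Nat.strong_induction_on with
  | _ n IH =>
  intro p hnp hnc hp'
  have hr : rfn ℓ n p = (n - 2 * p) % ℓ + 1 := rfl
  obtain ⟨k, hk⟩ : ∃ k, n - 2 * p = ℓ * k + (n - 2 * p) % ℓ :=
    ⟨(n - 2 * p) / ℓ, (Nat.div_add_mod _ ℓ).symm⟩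
  set s := (n - 2 * p) % ℓ with hs
  have hsl : s < ℓ := Nat.mod_lt _ (by omega)
  have hn2 : n = 2 * p + (ℓ * k + s) := by omega
  rw [hr] at hnc hp' ⊢
  have hs2 : s + 2 ≤ ℓ := by omega
  have hp1 : 1 ≤ p := by omega
  have hA : ℓ * (k + 1) = ℓ * k + ℓ := by ring
  set p' := p + (s + 1) - ℓ with hpdef
  have hp'lt : p' < p := by omega
  have hrP : rfn ℓ n p' = (ℓ - s - 2) + 1 :=
    rfn_eq ℓ n p' (ℓ - s - 2) (k + 1) (by omega) (by omega)
  have hpas : dd n p = dd (n - 1) p + dd (n - 1) (p - 1) := by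
    have := dd_pascal (n - 1) p hp1 (by omega)
    rwa [show n - 1 + 1 = n by omega] at this
  by_cases hs0 : s = 0
  · -- case r = 1
    have hAk : Lrec ℓ (n - 1) p = dd (n - 1) p := by
      rcases Nat.eq_zero_or_pos k with rfl | hk1
      · rw [show n - 1 = 2 * p - 1 by omega, Lrec_diag ℓ p hp1, dd_diag p hp1]
      · have hB : ℓ * k = ℓ * (k - 1) + ℓ := by
          obtain ⟨k0, rfl⟩ : ∃ k0, k = k0 + 1 := ⟨k - 1, by omega⟩
          rw [Nat.add_sub_cancel]; ring
        have hrc : rfn ℓ (n - 1) p = (ℓ - 1) + 1 :=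
          rfn_eq ℓ (n - 1) p (ℓ - 1) (k - 1) (by omega) (by omega)
        exact Lrec_crit ℓ (n - 1) p (by omega) (by omega)
    have hr2 : rfn ℓ (n - 1) (p - 1) = 1 + 1 :=
      rfn_eq ℓ (n - 1) (p - 1) 1 k (by omega) (by omega)
    by_cases hl2 : ℓ = 2
    · -- ℓ = 2, p' = p - 1
      have hC : Lrec ℓ (n - 1) (p - 1) = dd (n - 1) (p - 1) :=
        Lrec_crit ℓ (n - 1) (p - 1) (by omega) (by omega)
      have hLnp : Lrec ℓ n p = Lrec ℓ (n - 1) p := by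
        rw [Lrec_step ℓ n p hp1 hnp, if_neg (by omega), if_pos (by omega)]
      have hLnp' : Lrec ℓ n p' = Lrec ℓ (n - 1) (p - 1) := by
        have hp'e : p' = p - 1 := by omega
        rcases Nat.eq_zero_or_pos p' with h0 | hpp
        · rw [h0, Lrec_zero, show p - 1 = 0 by omega, Lrec_zero]
        · rw [Lrec_step ℓ n p' hpp (by omega), if_neg (by omega),
            if_pos (by omega), hp'e]
      rw [hpas, hLnp, hLnp', hAk, hC]
    · -- ℓ ≥ 3
      have hIH := IH (n - 1) (by omega) (p - 1) (by omega) (by omega) (by omega)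
      rw [hr2, show p - 1 + (1 + 1) - ℓ = p' by omega] at hIH
      have hLnp : Lrec ℓ n p = Lrec ℓ (n - 1) p + Lrec ℓ (n - 1) (p - 1) := by
        rw [Lrec_step ℓ n p hp1 hnp, if_neg (by omega), if_neg (by omega)]
      have hLnp' : Lrec ℓ n p' = Lrec ℓ (n - 1) p' := by
        rcases Nat.eq_zero_or_pos p' with h0 | hpp
        · rw [h0, Lrec_zero, Lrec_zero]
        · rw [Lrec_step ℓ n p' hpp (by omega), if_neg (by omega), if_pos (by omega)]
      rw [hpas, hLnp, hLnp', hAk, hIH]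
      omega
  · by_cases hse : s + 2 = ℓ
    · -- r = ℓ - 1, p' = p - 1
      have hp'e : p' = p - 1 := by omega
      have hLnp : Lrec ℓ n p = Lrec ℓ (n - 1) p := by
        rw [Lrec_step ℓ n p hp1 hnp, if_neg (by omega), if_pos (by omega)]
      have hr2 : rfn ℓ (n - 1) (p - 1) = (ℓ - 1) + 1 :=
        rfn_eq ℓ (n - 1) (p - 1) (ℓ - 1) k (by omega) (by omega)
      have hC : Lrec ℓ (n - 1) (p - 1) = dd (n - 1) (p - 1) :=
        Lrec_crit ℓ (n - 1) (p - 1) (by omega) (by omega)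
      have hr1 : rfn ℓ (n - 1) p = (ℓ - 3) + 1 :=
        rfn_eq ℓ (n - 1) p (ℓ - 3) k (by omega) (by omega)
      by_cases hp2 : 2 ≤ p
      · have hIH := IH (n - 1) (by omega) p (by omega) (by omega) (by omega)
        rw [hr1, show p + ((ℓ - 3) + 1) - ℓ = p - 2 by omega] at hIH
        have hLnp' : Lrec ℓ n p' = Lrec ℓ (n - 1) (p - 1) + Lrec ℓ (n - 1) (p - 2) := by
          rw [Lrec_step ℓ n p' (by omega) (by omega), if_neg (by omega),
            if_neg (by omega), hp'e, show p - 1 - 1 = p - 2 by omega]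
        rw [hpas, hLnp, hLnp', hC, hIH]
        omega
      · -- p = 1, p' = 0
        have hU : Lrec ℓ (n - 1) p = dd (n - 1) p :=
          Lrec_low ℓ hℓ (n - 1) p (by omega) (by omega)
        rw [hpas, hLnp, hU, show p' = 0 by omega, Lrec_zero,
          show p - 1 = 0 by omega, dd_zero]
    · -- generic: 1 ≤ s ≤ ℓ - 3
      have hLnp : Lrec ℓ n p = Lrec ℓ (n - 1) p + Lrec ℓ (n - 1) (p - 1) := by
        rw [Lrec_step ℓ n p hp1 hnp, if_neg (by omega), if_neg (by omega)]
      have hr1 : rfn ℓ (n - 1) p = (s - 1) + 1 :=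
        rfn_eq ℓ (n - 1) p (s - 1) k (by omega) (by omega)
      have hr2 : rfn ℓ (n - 1) (p - 1) = (s + 1) + 1 :=
        rfn_eq ℓ (n - 1) (p - 1) (s + 1) k (by omega) (by omega)
      have hIH2 := IH (n - 1) (by omega) (p - 1) (by omega) (by omega) (by omega)
      rw [hr2, show p - 1 + ((s + 1) + 1) - ℓ = p' by omega] at hIH2
      rcases Nat.eq_zero_or_pos p' with h0 | hpp
      · -- p' = 0
        have hU : Lrec ℓ (n - 1) p = dd (n - 1) p :=
          Lrec_low ℓ hℓ (n - 1) p (by omega) (by omega)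
        rw [h0] at hIH2 ⊢
        have hz1 := Lrec_zero ℓ (n - 1)
        have hz2 := Lrec_zero ℓ n
        rw [hpas, hLnp]
        omega
      · -- p' ≥ 1
        have hIH1 := IH (n - 1) (by omega) p (by omega) (by omega) (by omega)
        rw [hr1, show p + ((s - 1) + 1) - ℓ = p' - 1 by omega] at hIH1
        have hLnp' : Lrec ℓ n p' = Lrec ℓ (n - 1) p' + Lrec ℓ (n - 1) (p' - 1) := by
          rw [Lrec_step ℓ n p' hpp (by omega), if_neg (by omega), if_neg (by omega)]
        rw [hpas, hLnp, hLnp', hIH1, hIH2]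
        omega


/-- Let `q` be a root of unity with `ℓ ≥ 2` minimal such that `q^(2ℓ) = 1`, and
let `(n,p)` and `(n,p')` with `p > p' = p + r(n,p) - ℓ ≥ 0` form a symmetric
pair.  Then `dim V_{n,p} = dim L_{n,p} + dim L_{n,p'}`, i.e.
`d_{n,p} = L_{n,p} + L_{n,p'}`. -/
theorem stmt_18 (q : ℂ) (hq : q ≠ 0) (ℓ : ℕ) (hℓ2 : 2 ≤ ℓ)
    (hℓ : q ^ (2 * ℓ) = 1) (hmin : ∀ k : ℕ, 0 < k → q ^ (2 * k) = 1 → ℓ ≤ k)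
    (n p : ℕ) (hn : 1 ≤ n) (hnp : 2 * p ≤ n)
    (hnc : rfn ℓ n p ≠ ℓ) (hp' : ℓ ≤ p + rfn ℓ n p) :
    dd n p = Lrec ℓ n p + Lrec ℓ n (p + rfn ℓ n p - ℓ) := by
  exact main_lemma ℓ hℓ2 n p hnp hnc hp'
end
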